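/- Let O be a Σ-free operad in Top and T a planar tree. Then the space of O-decorations underline(O)(T), defined inductively by underline(O)(trivial tree) = point and underline(O)(Θ_n∘(T₁⊕⋯⊕T_n)) = O(n) × underline(O)(T₁) × ⋯ × underline(O)(T_n), with its natural right action of the group Aut(T) of non-planar automorphisms of T, is a numerable principal Aut(T)-space. -/

import Mathlib

open CategoryTheory Topology

noncomputable section

variable {X Y : Type} [TopologicalSpace X] [TopologicalSpace Y]

/-- The map induced on path components by a continuous map. -/
def pi0Map (f : C(X, Y)) : ZerothHomotopy X → ZerothHomotopy Y :=
  Quotient.map f fun _ _ h => Nonempty.map (fun γ => γ.map f.continuous) h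

/-- The generalized loop obtained by composing with a continuous map. -/
def genLoopMap (N : Type) (f : C(X, Y)) {x : X} (p : GenLoop N X x) : GenLoop N Y (f x) :=
  ⟨f.comp p.1, fun y hy => by
    simp only [ContinuousMap.comp_apply]
    rw [p.2 y hy]⟩

/-- The map induced on homotopy groups by a continuous map. -/
def piMap (N : Type) (f : C(X, Y)) (x : X) :
    HomotopyGroup N X x → HomotopyGroup N Y (f x) :=
  Quotient.map (genLoopMap N f) fun _ _ h => Nonempty.map (fun H => H.compContinuousMap f) h

/-- A continuous map is a weak homotopy equivalence if it induces a bijection on path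
components and on all homotopy groups at all basepoints. -/
def IsWeakHomotopyEquiv (f : C(X, Y)) : Prop :=
  Function.Bijective (pi0Map f) ∧ ∀ (n : ℕ) (x : X), Function.Bijective (piMap (Fin n) f x)

/-- A continuous map is a homotopy equivalence if it admits a homotopy inverse. -/
def IsHomotopyEquiv (f : C(X, Y)) : Prop :=
  ∃ g : C(Y, X), (g.comp f).Homotopic (ContinuousMap.id X) ∧
    (f.comp g).Homotopic (ContinuousMap.id Y)


/-! ### Auxiliary equivalences of finite index sets -/

/-- Decomposition of a sigma type over `Fin (n+1)`. -/
def sigmaFinSucc {n : ℕ} (j : Fin (n + 1) → ℕ) :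
    (Σ i : Fin (n + 1), Fin (j i)) ≃ (Fin (j 0) ⊕ Σ i : Fin n, Fin (j i.succ)) where
  toFun x := Fin.cases (motive := fun i => Fin (j i) → (Fin (j 0) ⊕ Σ i : Fin n, Fin (j i.succ)))
    (fun s => Sum.inl s) (fun i s => Sum.inr ⟨i, s⟩) x.1 x.2
  invFun x := match x with
    | .inl s => ⟨0, s⟩
    | .inr ⟨i, s⟩ => ⟨i.succ, s⟩
  left_inv := by rintro ⟨i, s⟩; induction i using Fin.cases <;> simp
  right_inv := by rintro (s | ⟨i, s⟩) <;> simp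

/-- The canonical "blocks" equivalence between a sigma of finite sets and the finite set
with the sum of the cardinalities. -/
def finSigmaEquiv : ∀ {n : ℕ} (j : Fin n → ℕ), (Σ i : Fin n, Fin (j i)) ≃ Fin (∑ i, j i)
  | 0, j =>
    haveI : IsEmpty (Fin (∑ i : Fin 0, j i)) := by
      rw [show (∑ i : Fin 0, j i) = 0 by simp]
      infer_instance
    Equiv.equivOfIsEmpty _ _
  | n + 1, j =>
    (sigmaFinSucc j).trans <|
      ((Equiv.refl (Fin (j 0))).sumCongr (finSigmaEquiv (fun i => j i.succ))).trans <|
        finSumFinEquiv.trans (finCongr (by rw [Fin.sum_univ_succ]))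

/-- The permutation of a sum of blocks obtained from permutations of the individual blocks. -/
def blockSumPerm {n : ℕ} (j : Fin n → ℕ) (τ : ∀ i, Equiv.Perm (Fin (j i))) :
    Equiv.Perm (Fin (∑ i, j i)) :=
  ((finSigmaEquiv j).symm.trans (Equiv.sigmaCongrRight τ)).trans (finSigmaEquiv j)

/-- The block reindexing equivalence associated to a permutation of the blocks. -/
def blockPermEquiv {n : ℕ} (j : Fin n → ℕ) (σ : Equiv.Perm (Fin n)) :
    Fin (∑ i, j (σ i)) ≃ Fin (∑ i, j i) :=
  ((finSigmaEquiv fun i => j (σ i)).symm.trans (Equiv.sigmaCongrLeft (β := fun i => Fin (j i)) σ)).trans (finSigmaEquiv j)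

/-! ### Operads in topological spaces -/

/-- A (symmetric) operad in topological spaces. -/
structure TopOperad where
  A : ℕ → Type
  top : ∀ n, TopologicalSpace (A n)
  unit : A 1
  act : ∀ n, A n → Equiv.Perm (Fin n) → A n
  act_continuous : ∀ n σ, Continuous fun a => act n a σ
  act_one : ∀ n a, act n a 1 = a
  act_mul : ∀ n a σ τ, act n (act n a σ) τ = act n a (σ * τ)
  comp : ∀ (n : ℕ) (j : Fin n → ℕ), A n → (∀ i, A (j i)) → A (∑ i, j i)
  comp_continuous : ∀ n j, Continuous fun p : A n × (∀ i, A (j i)) => comp n j p.1 p.2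
  comp_unit_left : ∀ (n : ℕ) (a : A n), HEq (comp 1 (fun _ => n) unit (fun _ => a)) a
  comp_unit_right : ∀ (n : ℕ) (a : A n), HEq (comp n (fun _ => 1) a (fun _ => unit)) a
  comp_assoc : ∀ (n : ℕ) (j : Fin n → ℕ) (k : ∀ i : Fin n, Fin (j i) → ℕ)
    (a : A n) (b : ∀ i, A (j i)) (c : ∀ i s, A (k i s)),
    HEq (comp (∑ i, j i) (fun t => k ((finSigmaEquiv j).symm t).1 ((finSigmaEquiv j).symm t).2)
          (comp n j a b)
          (fun t => c ((finSigmaEquiv j).symm t).1 ((finSigmaEquiv j).symm t).2))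
        (comp n (fun i => ∑ s, k i s) a (fun i => comp (j i) (k i) (b i) (c i)))
  comp_perm : ∀ (n : ℕ) (j : Fin n → ℕ) (a : A n) (b : ∀ i, A (j i)) (σ : Equiv.Perm (Fin n)),
    HEq (comp n (fun i => j (σ i)) (act n a σ) (fun i => b (σ i)))
        (act (∑ i, j i) (comp n j a b) ((blockPermEquiv j σ).symm.trans
          (finCongr (Equiv.sum_comp σ j))).symm
          )
  comp_act_inner : ∀ (n : ℕ) (j : Fin n → ℕ) (a : A n) (b : ∀ i, A (j i))
    (τ : ∀ i, Equiv.Perm (Fin (j i))),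
    comp n j a (fun i => act (j i) (b i) (τ i)) =
      act (∑ i, j i) (comp n j a b) (blockSumPerm j τ)

attribute [instance] TopOperad.top

/-! ### Algebras over a topological operad -/

/-- An algebra (`O`-space) over a topological operad. -/
structure TopAlg (O : TopOperad) where
  X : Type
  top : TopologicalSpace X
  θ : ∀ n, O.A n → (Fin n → X) → X
  θ_continuous : ∀ n, Continuous fun p : O.A n × (Fin n → X) => θ n p.1 p.2
  θ_unit : ∀ x, θ 1 O.unit (fun _ => x) = x
  θ_equivariant : ∀ n a σ xs, θ n (O.act n a σ) xs = θ n a fun i => xs (σ i)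
  θ_comp : ∀ (n : ℕ) (j : Fin n → ℕ) (a : O.A n) (b : ∀ i, O.A (j i))
    (xs : Fin (∑ i, j i) → X),
    θ (∑ i, j i) (O.comp n j a b) xs =
      θ n a fun i => θ (j i) (b i) fun s => xs (finSigmaEquiv j ⟨i, s⟩)

attribute [instance] TopAlg.top

/-- A homomorphism of algebras over a topological operad. -/
@[ext] structure TopAlgHom {O : TopOperad} (A B : TopAlg O) where
  f : A.X → B.X
  continuous : Continuous f
  map_θ : ∀ n a xs, f (A.θ n a xs) = B.θ n a fun i => f (xs i)

instance TopAlg.category (O : TopOperad) : Category (TopAlg O) where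
  Hom A B := TopAlgHom A B
  id A := ⟨id, continuous_id, fun _ _ _ => rfl⟩
  comp F G := ⟨G.f ∘ F.f, G.continuous.comp F.continuous, fun n a xs => by
    simp [Function.comp, F.map_θ, G.map_θ]⟩

/-- The underlying continuous map of a homomorphism of `O`-spaces. -/
def TopAlgHom.toC {O : TopOperad} {A B : TopAlg O} (F : TopAlgHom A B) : C(A.X, B.X) :=
  ⟨F.f, F.continuous⟩

/-- The weak equivalences of `O`-spaces: homomorphisms whose underlying map is a weak
homotopy equivalence. -/
def TopAlg.weq (O : TopOperad) : MorphismProperty (TopAlg O) :=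
  fun _ _ F => IsWeakHomotopyEquiv (TopAlgHom.toC F)

/-- `Σ`-freeness: each `O(n) → O(n)/Σ_n` is a numerable principal `Σ_n`-bundle, expressed
via the Boardman–Vogt criterion: there is a subordinate partition of unity whose supports
meet each of their translates under nontrivial permutations emptily. -/
def TopOperad.SigmaFree (O : TopOperad) : Prop :=
  ∀ n : ℕ, ∃ (ι : Type) (U : ι → Set (O.A n)) (f : PartitionOfUnity ι (O.A n) Set.univ),
    (∀ i, IsOpen (U i)) ∧ f.IsSubordinate U ∧
      ∀ (i : ι) (σ : Equiv.Perm (Fin n)), σ ≠ 1 →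
        Disjoint (U i) ((fun a => O.act n a σ) '' U i)


/-! ### The category of operators and diagrams over it -/

/-- The injection `Fin 1 ↪ Fin n` hitting `i`. -/
def singleEmb {n : ℕ} (i : Fin n) : Fin 1 ↪ Fin n :=
  ⟨fun _ => i, fun a b _ => Subsingleton.elim a b⟩

/-- The canonical identification `Fin n ↪ Fin (∑ 1)`. -/
def unitBlocksEmb (n : ℕ) : Fin n ↪ Fin (∑ _i : Fin n, 1) :=
  ⟨fun i => finSigmaEquiv (fun _ => 1) ⟨i, 0⟩, fun a b h => by
    have h2 := (finSigmaEquiv (fun _ : Fin n => 1)).injective h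
    exact congrArg Sigma.fst h2⟩

/-- The block injection associated to an injection of index sets: it maps the `i`-th block
identically onto the `σ(i)`-th block. -/
def blockEmb {k l : ℕ} (σ : Fin k ↪ Fin l) (r : Fin l → ℕ) :
    Fin (∑ i, r (σ i)) ↪ Fin (∑ i, r i) :=
  ⟨fun t => finSigmaEquiv r ⟨σ ((finSigmaEquiv fun i => r (σ i)).symm t).1,
      ((finSigmaEquiv fun i => r (σ i)).symm t).2⟩, fun t t' h => by
    set e := finSigmaEquiv fun i => r (σ i) with he
    have h2 := (finSigmaEquiv r).injective h
    have h3 : σ (e.symm t).1 = σ (e.symm t').1 := congrArg Sigma.fst h2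
    have h4 : (e.symm t).1 = (e.symm t').1 := σ.injective h3
    have h5 : e.symm t = e.symm t' := by
      exact Sigma.ext h4 (Sigma.ext_iff.mp h2).2
    exact e.symm.injective h5⟩

/-- A diagram over the category of operators `Ô` of a topological operad (an `Ô`-space):
spaces `G n`, contravariant projections indexed by injections, and a covariant action of
tuples of operad elements, subject to unit, functoriality and interchange relations. -/
structure OHatSpace (O : TopOperad) where
  G : ℕ → Type
  top : ∀ n, TopologicalSpace (G n)
  proj : ∀ {k l : ℕ}, (Fin k ↪ Fin l) → G l → G k
  proj_continuous : ∀ {k l : ℕ} (σ : Fin k ↪ Fin l), Continuous (proj σ)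
  proj_id : ∀ (n : ℕ) (x : G n), proj (Function.Embedding.refl (Fin n)) x = x
  proj_comp : ∀ {k l m : ℕ} (σ : Fin k ↪ Fin l) (τ : Fin l ↪ Fin m) (x : G m),
    proj (σ.trans τ) x = proj σ (proj τ x)
  act : ∀ {n : ℕ} (j : Fin n → ℕ), (∀ i, O.A (j i)) → G (∑ i, j i) → G n
  act_continuous : ∀ {n : ℕ} (j : Fin n → ℕ),
    Continuous fun p : (∀ i, O.A (j i)) × G (∑ i, j i) => act j p.1 p.2
  act_unit : ∀ (n : ℕ) (x : G (∑ _i : Fin n, 1)),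
    act (fun _ => 1) (fun _ => O.unit) x = proj (unitBlocksEmb n) x
  exchange : ∀ {k l : ℕ} (σ : Fin k ↪ Fin l) (r : Fin l → ℕ) (g : ∀ i, O.A (r i))
    (x : G (∑ i, r i)),
    act (fun i => r (σ i)) (fun i => g (σ i)) (proj (blockEmb σ r) x) = proj σ (act r g x)

attribute [instance] OHatSpace.top

/-- A map of `Ô`-spaces. -/
@[ext] structure OHatHom {O : TopOperad} (G₁ G₂ : OHatSpace O) where
  f : ∀ n, G₁.G n → G₂.G n
  continuous : ∀ n, Continuous (f n)
  map_proj : ∀ {k l : ℕ} (σ : Fin k ↪ Fin l) (x : G₁.G l), f k (G₁.proj σ x) = G₂.proj σ (f l x)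
  map_act : ∀ {n : ℕ} (j : Fin n → ℕ) (b : ∀ i, O.A (j i)) (x : G₁.G (∑ i, j i)),
    f n (G₁.act j b x) = G₂.act j b (f (∑ i, j i) x)

instance OHatSpace.category (O : TopOperad) : Category (OHatSpace O) where
  Hom G₁ G₂ := OHatHom G₁ G₂
  id G := ⟨fun _ => id, fun _ => continuous_id, fun _ _ => rfl, fun _ _ _ => rfl⟩
  comp F G := ⟨fun n => G.f n ∘ F.f n, fun n => (G.continuous n).comp (F.continuous n),
    fun σ x => by simp [Function.comp, F.map_proj, G.map_proj],
    fun j b x => by simp [Function.comp, F.map_act, G.map_act]⟩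

/-- An `Ô`-space is special if the canonical map `G(n) → G(1)ⁿ` induced by the `n`
injections `1 → n` is a homotopy equivalence for every `n`. -/
def OHatSpace.Special {O : TopOperad} (G : OHatSpace O) : Prop :=
  ∀ n : ℕ, IsHomotopyEquiv
    (⟨fun x i => G.proj (singleEmb i) x,
      continuous_pi fun i => G.proj_continuous (singleEmb i)⟩ :
      C(G.G n, Fin n → G.G 1))

/-- The special `Ô`-space `X̂` (with `X̂(n) = Xⁿ`) associated to an `O`-algebra. -/
def TopAlg.hat {O : TopOperad} (A : TopAlg O) : OHatSpace O where
  G n := Fin n → A.X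
  top _ := inferInstance
  proj σ xs := fun i => xs (σ i)
  proj_continuous σ := continuous_pi fun i => continuous_apply _
  proj_id _ _ := rfl
  proj_comp _ _ _ := rfl
  act j b xs := fun i => A.θ (j i) (b i) fun s => xs (finSigmaEquiv j ⟨i, s⟩)
  act_continuous j := by
    refine continuous_pi fun i => ?_
    have h : Continuous fun p : (∀ i, O.A (j i)) × (Fin (∑ i, j i) → A.X) =>
        ((p.1 i, fun s => p.2 (finSigmaEquiv j ⟨i, s⟩)) : O.A (j i) × (Fin (j i) → A.X)) := by
      fun_prop
    exact (A.θ_continuous (j i)).comp h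
  act_unit n x := funext fun i => by
    have h : (fun s : Fin 1 => x (finSigmaEquiv (fun _ : Fin n => 1) ⟨i, s⟩)) =
        fun _ : Fin 1 => x (finSigmaEquiv (fun _ : Fin n => 1) ⟨i, 0⟩) :=
      funext fun s => by rw [Subsingleton.elim s 0]
    show A.θ 1 O.unit _ = _
    rw [h, A.θ_unit]
    rfl
  exchange σ r g x := funext fun i => by
    show A.θ _ _ _ = A.θ _ _ _
    congr 1
    funext s
    show x ((blockEmb σ r) ((finSigmaEquiv fun i => r (σ i)) ⟨i, s⟩)) = _
    show x (finSigmaEquiv r ⟨σ ((finSigmaEquiv fun i => r (σ i)).symm ((finSigmaEquiv fun i => r (σ i)) ⟨i, s⟩)).1,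
      ((finSigmaEquiv fun i => r (σ i)).symm ((finSigmaEquiv fun i => r (σ i)) ⟨i, s⟩)).2⟩) = _
    rw [Equiv.symm_apply_apply]

/-- The functor sending an `O`-algebra `X` to its associated `Ô`-space `X̂`. -/
def hatFunctor (O : TopOperad) : TopAlg O ⥤ OHatSpace O where
  obj A := A.hat
  map {A B} F :=
    { f := fun n xs i => F.f (xs i)
      continuous := fun n => continuous_pi fun i => F.continuous.comp (continuous_apply i)
      map_proj := fun _ _ => rfl
      map_act := fun j b x => funext fun i => F.map_θ _ _ _ }


/-! ### Maps of operads, operadic weak equivalences, change of operads -/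

/-- A map of topological operads. -/
structure TopOperadHom (O P : TopOperad) where
  f : ∀ n, O.A n → P.A n
  continuous : ∀ n, Continuous (f n)
  map_unit : f 1 O.unit = P.unit
  map_act : ∀ n a σ, f n (O.act n a σ) = P.act n (f n a) σ
  map_comp : ∀ (n : ℕ) (j : Fin n → ℕ) (a : O.A n) (b : ∀ i, O.A (j i)),
    f (∑ i, j i) (O.comp n j a b) = P.comp n j (f n a) fun i => f (j i) (b i)

/-- A `Σ_n`-equivariant homotopy equivalence (with equivariant homotopy inverse and
equivariant homotopies). -/
def IsEquivariantHomotopyEquiv {n : ℕ} {X Y : Type} [TopologicalSpace X] [TopologicalSpace Y]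
    (aX : X → Equiv.Perm (Fin n) → X) (aY : Y → Equiv.Perm (Fin n) → Y) (f : C(X, Y)) : Prop :=
  (∀ (x : X) (σ : Equiv.Perm (Fin n)), f (aX x σ) = aY (f x) σ) ∧
  ∃ g : C(Y, X), (∀ (y : Y) (σ : Equiv.Perm (Fin n)), g (aY y σ) = aX (g y) σ) ∧
    (∃ H : ContinuousMap.Homotopy (g.comp f) (ContinuousMap.id X),
      ∀ t x σ, H (t, aX x σ) = aX (H (t, x)) σ) ∧
    (∃ K : ContinuousMap.Homotopy (f.comp g) (ContinuousMap.id Y),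
      ∀ t y σ, K (t, aY y σ) = aY (K (t, y)) σ)

/-- A map of operads is a weak equivalence if each of its components is an equivariant
homotopy equivalence. -/
def TopOperadHom.IsWeakEquivalence {O P : TopOperad} (φ : TopOperadHom O P) : Prop :=
  ∀ n, IsEquivariantHomotopyEquiv (O.act n) (P.act n) ⟨φ.f n, φ.continuous n⟩

/-- Two topological operads are equivalent if they are connected by a finite chain of weak
equivalences of operads. -/
def TopOperad.Equivalent : TopOperad → TopOperad → Prop :=
  Relation.EqvGen fun O P => ∃ φ : TopOperadHom O P, φ.IsWeakEquivalence

/-- Restriction of algebras along a map of operads. -/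
def restrictAlong {O P : TopOperad} (φ : TopOperadHom O P) : TopAlg P ⥤ TopAlg O where
  obj B :=
    { X := B.X
      top := B.top
      θ := fun n a xs => B.θ n (φ.f n a) xs
      θ_continuous := fun n => by
        have h : Continuous fun p : O.A n × (Fin n → B.X) =>
            ((φ.f n p.1, p.2) : P.A n × (Fin n → B.X)) :=
          Continuous.prodMk (Continuous.comp (φ.continuous n) continuous_fst) continuous_snd
        exact (B.θ_continuous n).comp h
      θ_unit := fun x => by show B.θ 1 (φ.f 1 O.unit) _ = x; rw [φ.map_unit]; exact B.θ_unit x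
      θ_equivariant := fun n a σ xs => by
        show B.θ n (φ.f n (O.act n a σ)) xs = B.θ n (φ.f n a) fun i => xs (σ i)
        rw [φ.map_act]; exact B.θ_equivariant n _ σ xs
      θ_comp := fun n j a b xs => by
        show B.θ _ (φ.f _ (O.comp n j a b)) xs = _
        rw [φ.map_comp]; exact B.θ_comp n j _ _ xs }
  map F := ⟨F.f, F.continuous, fun n a xs => F.map_θ n (φ.f n a) xs⟩
  map_id _ := rfl
  map_comp _ _ := rfl


/-! ### The classifying space functor -/

/-- The classifying space of a small category: the geometric realization of its nerve. -/
def BObj (C : Type) [SmallCategory C] : TopCat :=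
  SSet.toTop.obj (nerveFunctor.obj (Cat.of C))

/-- The continuous map induced on classifying spaces by a functor. -/
def Bmap {C D : Type} [SmallCategory C] [SmallCategory D] (F : C ⥤ D) :
    C((BObj C : Type), (BObj D : Type)) :=
  SSet.toTop.map (nerveFunctor.map (X := Cat.of C) (Y := Cat.of D) F.toCatHom) |>.hom

/-- A functor is a weak equivalence if it induces a weak homotopy equivalence of
classifying spaces. -/
def IsBWeakEquiv {C D : Type} [SmallCategory C] [SmallCategory D] (F : C ⥤ D) : Prop :=
  IsWeakHomotopyEquiv (Bmap F)

/-- A functor is an equivalence (in the homotopical sense) if it induces a homotopy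
equivalence of classifying spaces. -/
def IsBHomotopyEquiv {C D : Type} [SmallCategory C] [SmallCategory D] (F : C ⥤ D) : Prop :=
  IsHomotopyEquiv (Bmap F)

/-! ### Operads in Cat -/

/-- A (symmetric) operad in the category of small categories.  The structure of a
symmetric operad is recorded by a strictly functorial right action of the symmetric
groups, composition functors, and the unit, associativity and equivariance relations
(the latter stated on objects). -/
structure CatOperad where
  A : ℕ → Type
  cat : ∀ n, SmallCategory (A n)
  unit : A 1
  act : ∀ (n : ℕ), Equiv.Perm (Fin n) → (A n ⥤ A n)
  act_one : ∀ n, act n 1 = 𝟭 (A n)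
  act_mul : ∀ n σ τ, act n σ ⋙ act n τ = act n (σ * τ)
  comp : ∀ (n : ℕ) (j : Fin n → ℕ), (A n × ∀ i, A (j i)) ⥤ A (∑ i, j i)
  comp_unit_left : ∀ (n : ℕ) (a : A n),
    HEq ((comp 1 (fun _ => n)).obj (unit, fun _ => a)) a
  comp_unit_right : ∀ (n : ℕ) (a : A n),
    HEq ((comp n (fun _ => 1)).obj (a, fun _ => unit)) a
  comp_assoc : ∀ (n : ℕ) (j : Fin n → ℕ) (k : ∀ i : Fin n, Fin (j i) → ℕ)
    (a : A n) (b : ∀ i, A (j i)) (c : ∀ i s, A (k i s)),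
    HEq ((comp (∑ i, j i) fun t => k ((finSigmaEquiv j).symm t).1
          ((finSigmaEquiv j).symm t).2).obj
          ((comp n j).obj (a, b), fun t => c ((finSigmaEquiv j).symm t).1
            ((finSigmaEquiv j).symm t).2))
        ((comp n fun i => ∑ s, k i s).obj
          (a, fun i => (comp (j i) (k i)).obj (b i, c i)))
  comp_perm : ∀ (n : ℕ) (j : Fin n → ℕ) (a : A n) (b : ∀ i, A (j i)) (σ : Equiv.Perm (Fin n)),
    HEq ((comp n fun i => j (σ i)).obj ((act n σ).obj a, fun i => b (σ i)))
        ((act (∑ i, j i) ((blockPermEquiv j σ).symm.trans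
            (finCongr (Equiv.sum_comp σ j))).symm).obj ((comp n j).obj (a, b)))
  comp_act_inner : ∀ (n : ℕ) (j : Fin n → ℕ) (a : A n) (b : ∀ i, A (j i))
    (τ : ∀ i, Equiv.Perm (Fin (j i))),
    (comp n j).obj (a, fun i => (act (j i) (τ i)).obj (b i)) =
      (act (∑ i, j i) (blockSumPerm j τ)).obj ((comp n j).obj (a, b))

attribute [instance] CatOperad.cat

/-- `Σ`-freeness for an operad in `Cat`: no nontrivial permutation fixes an object
(hence also no morphism). -/
def CatOperad.SigmaFree (O : CatOperad) : Prop :=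
  ∀ (n : ℕ) (σ : Equiv.Perm (Fin n)), σ ≠ 1 → ∀ a : O.A n, (O.act n σ).obj a ≠ a

/-! ### Algebras over an operad in Cat -/

/-- The functor induced on powers of a category by a functor. -/
def piMapCat {X Y : Type} [SmallCategory X] [SmallCategory Y] (n : ℕ) (F : X ⥤ Y) :
    (Fin n → X) ⥤ (Fin n → Y) :=
  Functor.pi' fun i => Pi.eval _ i ⋙ F

/-- An algebra over an operad in `Cat`: a small category with a strictly symmetric
monoidal action of the operad. -/
structure CatAlg (O : CatOperad) where
  X : Type
  cat : SmallCategory X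
  θ : ∀ n : ℕ, (O.A n × (Fin n → X)) ⥤ X
  θ_unit : Functor.prod' ((Functor.const X).obj O.unit)
      (Functor.pi' fun _ : Fin 1 => 𝟭 X) ⋙ θ 1 = 𝟭 X
  θ_equivariant : ∀ (n : ℕ) (σ : Equiv.Perm (Fin n)),
    Functor.prod (O.act n σ) (𝟭 (Fin n → X)) ⋙ θ n =
      Functor.prod (𝟭 (O.A n)) (Pi.comap (fun _ : Fin n => X) ⇑σ) ⋙ θ n
  θ_comp : ∀ (n : ℕ) (j : Fin n → ℕ),
    Functor.prod (O.comp n j) (𝟭 (Fin (∑ i, j i) → X)) ⋙ θ (∑ i, j i) =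
      Functor.prod'
        (CategoryTheory.Prod.fst (O.A n × ∀ i, O.A (j i)) (Fin (∑ i, j i) → X) ⋙
          CategoryTheory.Prod.fst (O.A n) (∀ i, O.A (j i)))
        (Functor.pi' fun i =>
          Functor.prod'
            (CategoryTheory.Prod.fst (O.A n × ∀ i, O.A (j i)) (Fin (∑ i, j i) → X) ⋙
              CategoryTheory.Prod.snd (O.A n) (∀ i, O.A (j i)) ⋙
                Pi.eval (fun i => O.A (j i)) i)
            (CategoryTheory.Prod.snd (O.A n × ∀ i, O.A (j i)) (Fin (∑ i, j i) → X) ⋙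
              Pi.comap (fun _ : Fin (∑ i, j i) => X)
                fun s => finSigmaEquiv j ⟨i, s⟩) ⋙ θ (j i)) ⋙ θ n

attribute [instance] CatAlg.cat

/-- A homomorphism of algebras over an operad in `Cat`. -/
@[ext] structure CatAlgHom {O : CatOperad} (A B : CatAlg O) where
  F : A.X ⥤ B.X
  map_θ : ∀ n : ℕ, A.θ n ⋙ F =
    Functor.prod (𝟭 (O.A n)) (piMapCat n F) ⋙ B.θ n

instance CatAlg.category (O : CatOperad) : Category (CatAlg O) where
  Hom A B := CatAlgHom A B
  id A := ⟨𝟭 A.X, fun n => rfl⟩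
  comp {A B C} F G := ⟨F.F ⋙ G.F, fun n => by
    rw [← Functor.assoc, F.map_θ, Functor.assoc, G.map_θ, ← Functor.assoc]
    rfl⟩

/-- The weak equivalences of `O`-algebras in `Cat`: homomorphisms whose classifying map
is a weak homotopy equivalence. -/
def CatAlg.weq (O : CatOperad) : MorphismProperty (CatAlg O) :=
  fun _ _ F => IsBWeakEquiv (CatAlgHom.F F)


/-! ### Diagrams over the category of operators of a `Cat`-operad -/

/-- A diagram over the category of operators `Ô` of an operad in `Cat`
(an `Ô`-category). -/
structure OHatCat (O : CatOperad) where
  G : ℕ → Type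
  cat : ∀ n, SmallCategory (G n)
  proj : ∀ {k l : ℕ}, (Fin k ↪ Fin l) → (G l ⥤ G k)
  proj_id : ∀ n : ℕ, proj (Function.Embedding.refl (Fin n)) = 𝟭 (G n)
  proj_comp : ∀ {k l m : ℕ} (σ : Fin k ↪ Fin l) (τ : Fin l ↪ Fin m),
    proj (σ.trans τ) = proj τ ⋙ proj σ
  act : ∀ {n : ℕ} (j : Fin n → ℕ), ((∀ i, O.A (j i)) × G (∑ i, j i)) ⥤ G n

attribute [instance] OHatCat.cat

/-- A map of `Ô`-categories. -/
@[ext] structure OHatCatHom {O : CatOperad} (G₁ G₂ : OHatCat O) where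
  f : ∀ n, G₁.G n ⥤ G₂.G n
  map_proj : ∀ {k l : ℕ} (σ : Fin k ↪ Fin l), G₁.proj σ ⋙ f k = f l ⋙ G₂.proj σ
  map_act : ∀ {n : ℕ} (j : Fin n → ℕ),
    G₁.act j ⋙ f n = Functor.prod (𝟭 (∀ i, O.A (j i))) (f (∑ i, j i)) ⋙ G₂.act j

instance OHatCat.category (O : CatOperad) : Category (OHatCat O) where
  Hom := OHatCatHom
  id G := ⟨fun _ => 𝟭 _, fun _ => rfl, fun _ => rfl⟩
  comp {G₁ G₂ G₃} F G := ⟨fun n => F.f n ⋙ G.f n,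
    fun σ => by rw [← Functor.assoc, F.map_proj, Functor.assoc, G.map_proj, ← Functor.assoc],
    fun j => by
      rw [← Functor.assoc, F.map_act, Functor.assoc, G.map_act, ← Functor.assoc]
      rfl⟩

/-- An `Ô`-category is special if each canonical functor `G(n) → G(1)ⁿ` is a weak
equivalence (induces a homotopy equivalence of classifying spaces). -/
def OHatCat.Special {O : CatOperad} (G : OHatCat O) : Prop :=
  ∀ n : ℕ, IsBHomotopyEquiv (Functor.pi' fun i : Fin n => G.proj (singleEmb i))

/-- A map of `Ô`-categories is an objectwise weak equivalence if each component functor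
induces a weak homotopy equivalence of classifying spaces. -/
def OHatCatHom.IsObjectwiseWeq {O : CatOperad} {G₁ G₂ : OHatCat O} (F : OHatCatHom G₁ G₂) :
    Prop :=
  ∀ n, IsBWeakEquiv (F.f n)

/-- The `Ô`-category `X̂` (with `X̂(n) = Xⁿ`) associated to an algebra over an operad
in `Cat`. -/
def CatAlg.hat {O : CatOperad} (A : CatAlg O) : OHatCat O where
  G n := Fin n → A.X
  cat _ := inferInstance
  proj σ := Pi.comap (fun _ => A.X) ⇑σ
  proj_id _ := rfl
  proj_comp _ _ := rfl
  act {n} j := Functor.pi' fun i =>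
    Functor.prod'
      (CategoryTheory.Prod.fst (∀ i, O.A (j i)) (Fin (∑ i, j i) → A.X) ⋙
        Pi.eval (fun i => O.A (j i)) i)
      (CategoryTheory.Prod.snd (∀ i, O.A (j i)) (Fin (∑ i, j i) → A.X) ⋙
        Pi.comap (fun _ : Fin (∑ i, j i) => A.X) fun s => finSigmaEquiv j ⟨i, s⟩) ⋙
      A.θ (j i)

/-- The functor sending an `O`-algebra in `Cat` to its associated `Ô`-category. -/
def hatFunctorCat (O : CatOperad) : CatAlg O ⥤ OHatCat O where
  obj A := A.hat
  map {A B} F :=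
    { f := fun n => piMapCat n F.F
      map_proj := fun _ => rfl
      map_act := fun {n} j => by
        show Functor.pi'
            (fun i =>
              (Functor.prod'
                (CategoryTheory.Prod.fst (∀ i, O.A (j i)) (Fin (∑ i, j i) → A.X) ⋙
                  Pi.eval (fun i => O.A (j i)) i)
                (CategoryTheory.Prod.snd (∀ i, O.A (j i)) (Fin (∑ i, j i) → A.X) ⋙
                  Pi.comap (fun _ : Fin (∑ i, j i) => A.X) fun s => finSigmaEquiv j ⟨i, s⟩)) ⋙
              (A.θ (j i) ⋙ F.F)) =
          Functor.pi'
            (fun i =>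
              Functor.prod (𝟭 (∀ i, O.A (j i))) (piMapCat (∑ i, j i) F.F) ⋙
                ((Functor.prod'
                  (CategoryTheory.Prod.fst (∀ i, O.A (j i)) (Fin (∑ i, j i) → B.X) ⋙
                    Pi.eval (fun i => O.A (j i)) i)
                  (CategoryTheory.Prod.snd (∀ i, O.A (j i)) (Fin (∑ i, j i) → B.X) ⋙
                    Pi.comap (fun _ : Fin (∑ i, j i) => B.X) fun s => finSigmaEquiv j ⟨i, s⟩)) ⋙
                B.θ (j i)))
        refine congrArg Functor.pi' (funext fun i => ?_)
        rw [F.map_θ (j i)]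
        rfl }
  map_id A := by
    apply OHatCatHom.ext
    funext n
    rfl
  map_comp F G := by
    apply OHatCatHom.ext
    funext n
    rfl


/-! ### Maps of operads in Cat, and classifying operads -/

/-- A map of operads in `Cat`. -/
structure CatOperadHom (O P : CatOperad) where
  t : ∀ n, O.A n ⥤ P.A n
  map_unit : (t 1).obj O.unit = P.unit
  map_act : ∀ n σ, O.act n σ ⋙ t n = t n ⋙ P.act n σ
  map_comp : ∀ (n : ℕ) (j : Fin n → ℕ),
    O.comp n j ⋙ t (∑ i, j i) =
      Functor.prod (t n) (Functor.pi fun i => t (j i)) ⋙ P.comp n j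

/-- A map of operads in `Cat` is a weak equivalence if each component induces a
`Σ_n`-equivariant homotopy equivalence of classifying spaces. -/
def CatOperadHom.IsWeakEquivalence {O P : CatOperad} (φ : CatOperadHom O P) : Prop :=
  ∀ n, IsEquivariantHomotopyEquiv
    (fun x σ => Bmap (O.act n σ) x) (fun y σ => Bmap (P.act n σ) y) (Bmap (φ.t n))

/-- An identification of a topological operad `P` with the classifying operad `BO` of an
operad `O` in `Cat`: level-wise homeomorphisms `P(n) ≅ B(O(n))` compatible with the
symmetric group actions, units and compositions (the latter expressed via the canonical
comparison maps `B(C × D) → BC × BD`, which are required to be bijective, reflecting the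
fact that the classifying space functor preserves products). -/
structure ClassifyingOperad (O : CatOperad) (P : TopOperad) where
  e : ∀ n, P.A n ≃ₜ (BObj (O.A n) : Type)
  act_compat : ∀ (n : ℕ) (σ : Equiv.Perm (Fin n)) (x : P.A n),
    e n (P.act n x σ) = Bmap (O.act n σ) (e n x)
  unit_compat : ∀ z : (BObj (Discrete PUnit) : Type),
    e 1 P.unit = Bmap (Functor.fromPUnit O.unit) z
  comparison_bijective : ∀ (C D : Type) [SmallCategory C] [SmallCategory D],
    Function.Bijective fun z : (BObj (C × D) : Type) =>
      (Bmap (CategoryTheory.Prod.fst C D) z, Bmap (CategoryTheory.Prod.snd C D) z)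
  comp_compat : ∀ (n : ℕ) (j : Fin n → ℕ) (z : (BObj (O.A n × ∀ i, O.A (j i)) : Type)),
    e (∑ i, j i) (P.comp n j
        ((e n).symm (Bmap (CategoryTheory.Prod.fst (O.A n) (∀ i, O.A (j i))) z))
        fun i => (e (j i)).symm
          (Bmap (CategoryTheory.Prod.snd (O.A n) (∀ i, O.A (j i)) ⋙
            Pi.eval (fun i => O.A (j i)) i) z)) =
      Bmap (O.comp n j) z

/-- A lift of the classifying space functor to a functor from `O`-algebras in `Cat` to
`P`-spaces, where `P` is an identification of the operad `BO`; it is determined by natural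
homeomorphisms with the classifying spaces, compatibly with the algebra structures. -/
structure BAlgLift (O : CatOperad) (P : TopOperad) (cp : ClassifyingOperad O P) where
  F : CatAlg O ⥤ TopAlg P
  e : ∀ A : CatAlg O, (F.obj A).X ≃ₜ (BObj A.X : Type)
  map_compat : ∀ {A B : CatAlg O} (f : A ⟶ B) (x : (F.obj A).X),
    e B (((F.map f).f x)) = Bmap (CatAlgHom.F f) (e A x)
  θ_compat : ∀ (A : CatAlg O) (n : ℕ) (z : (BObj (O.A n × (Fin n → A.X)) : Type)),
    e A ((F.obj A).θ n
        ((cp.e n).symm (Bmap (CategoryTheory.Prod.fst (O.A n) (Fin n → A.X)) z))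
        fun i => (e A).symm
          (Bmap (CategoryTheory.Prod.snd (O.A n) (Fin n → A.X) ⋙
            Pi.eval (fun _ => A.X) i) z)) =
      Bmap (A.θ n) z

/-! ### Pointed spaces and iterated loop spaces -/

/-- A pointed topological space. -/
structure PtdSpace where
  X : Type
  top : TopologicalSpace X
  pt : X

attribute [instance] PtdSpace.top

/-- A pointed continuous map. -/
@[ext] structure PtdMap (A B : PtdSpace) where
  f : A.X → B.X
  continuous : Continuous f
  map_pt : f A.pt = B.pt

instance PtdSpace.category : Category PtdSpace where
  Hom := PtdMap
  id A := ⟨id, continuous_id, rfl⟩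
  comp F G := ⟨G.f ∘ F.f, G.continuous.comp F.continuous, by
    simp [Function.comp, F.map_pt, G.map_pt]⟩

/-- The loop space functor on pointed spaces. -/
def LoopFunctor : PtdSpace ⥤ PtdSpace where
  obj A := ⟨Path A.pt A.pt, inferInstance, Path.refl A.pt⟩
  map {A B} F :=
    { f := fun γ => (γ.map F.continuous).cast F.map_pt.symm F.map_pt.symm
      continuous := by
        have h : Continuous fun p : Path A.pt A.pt × unitInterval => F.f (p.1 p.2) :=
          F.continuous.comp continuous_eval
        exact Path.continuous_uncurry_iff.mp h
      map_pt := by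
        ext t
        simp [Path.cast, Path.map_coe, F.map_pt] }
  map_id A := by
    apply PtdMap.ext
    funext γ
    ext t
    simp only [Path.cast, Path.map_coe]
    rfl
  map_comp F G := by
    apply PtdMap.ext
    funext γ
    ext t
    simp only [Path.cast, Path.map_coe]
    rfl

/-- The `n`-fold loop space functor. -/
def loopN : ℕ → (PtdSpace ⥤ PtdSpace)
  | 0 => 𝟭 _
  | n + 1 => loopN n ⋙ LoopFunctor

/-- The weak equivalences of the category `Ωⁿ-Top` of `n`-fold loop spaces: (deloopings of)
`n`-fold loop maps whose `n`-fold looping is a weak homotopy equivalence. -/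
def loopWeq (n : ℕ) : MorphismProperty PtdSpace := fun A B F =>
  IsWeakHomotopyEquiv
    (⟨((loopN n).map F).f, ((loopN n).map F).continuous⟩ :
      C(((loopN n).obj A).X, ((loopN n).obj B).X))


/-! ### Planar trees, decorations, and tree isomorphisms -/

/-- Finite planar rooted trees: `leaf` is the trivial tree (a single edge), and
`node n ch` has a root node of valence `n` with the trees `ch i` (possibly trivial)
grafted onto its inputs; stumps are nodes of valence `0`. -/
inductive PTree : Type
  | leaf : PTree
  | node (n : ℕ) (ch : Fin n → PTree) : PTree

/-- The space of `O`-decorations of the nodes of a planar tree, defined inductively by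
`deco(leaf) = *` and `deco(Θ_n ∘ (T₁ ⊕ ⋯ ⊕ T_n)) = O(n) × deco(T₁) × ⋯ × deco(T_n)`. -/
def TopOperad.deco (O : TopOperad) : PTree → Type
  | .leaf => PUnit
  | .node n ch => O.A n × ∀ i, O.deco (ch i)

/-- The (product) topology on the space of decorations. -/
instance TopOperad.decoTop (O : TopOperad) : ∀ T : PTree, TopologicalSpace (O.deco T)
  | .leaf => inferInstanceAs (TopologicalSpace PUnit)
  | .node n ch =>
    letI := fun i => O.decoTop (ch i)
    inferInstanceAs (TopologicalSpace (O.A n × ∀ i, O.deco (ch i)))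

/-- Non-planar isomorphisms of planar trees: an isomorphism decomposes as a permutation
`σ` of the branches over the root together with isomorphisms `T_{σ(i)} ≅ T'_i`. -/
inductive TreeIso : PTree → PTree → Type
  | leaf : TreeIso .leaf .leaf
  | node {n : ℕ} {ch ch' : Fin n → PTree} (σ : Equiv.Perm (Fin n))
      (φ : ∀ i, TreeIso (ch (σ i)) (ch' i)) : TreeIso (.node n ch) (.node n ch')

/-- The identity isomorphism of a planar tree. -/
def TreeIso.id : ∀ T : PTree, TreeIso T T
  | .leaf => .leaf
  | .node _ ch => .node 1 fun i => TreeIso.id (ch i)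

/-- The natural right action of tree isomorphisms on decorations: `φ : T ≅ U` induces
`φ* : deco(U) → deco(T)`, acting on the root decoration by the root permutation and
recursively on the decorations of the branches. -/
def TopOperad.decoMap (O : TopOperad) :
    ∀ {T U : PTree}, TreeIso T U → O.deco U → O.deco T
  | _, _, .leaf, _ => PUnit.unit
  | _, _, @TreeIso.node n ch ch' σ φ, d =>
    (O.act n d.1 σ, fun i =>
      cast (congrArg (fun t => O.deco (ch t)) (σ.apply_symm_apply i))
        (O.decoMap (φ (σ.symm i)) (d.2 (σ.symm i))))


/-!
Induction on the tree. An automorphism of `Θ_n ∘ (T₁ ⊕ ⋯ ⊕ T_n)` is a permutation `σ` of the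
branches together with isomorphisms between them. If `σ ≠ 1` it moves every member of the
`Σ_n`-free cover of `O(n)` off itself; if `σ = 1` but the automorphism is not the identity, it
restricts to a nonidentity automorphism of some branch `T_i`, which moves every member of the
cover of `deco(T_i)` given by induction off itself. So the products of these covers, with the
products of their partitions of unity, do the job for `deco(T)`.
-/

namespace PartitionOfUnity

variable {X Y : Type*} [TopologicalSpace X] [TopologicalSpace Y] {ι κ : Type*}

def comp (f : PartitionOfUnity ι Y Set.univ) (g : C(X, Y)) : PartitionOfUnity ι X Set.univ where
  toFun i := (f i).comp g
  locallyFinite' := f.locallyFinite.preimage_continuous g.continuous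
  nonneg' i x := f.nonneg i (g x)
  sum_eq_one' x _ := f.sum_eq_one (Set.mem_univ (g x))
  sum_le_one' x := f.sum_le_one (g x)

theorem IsSubordinate.comp {f : PartitionOfUnity ι Y Set.univ} {U : ι → Set Y}
    (hf : f.IsSubordinate U) (g : C(X, Y)) : (f.comp g).IsSubordinate fun i => g ⁻¹' U i :=
  fun i => (tsupport_comp_subset_preimage (f i) g.continuous).trans (Set.preimage_mono (hf i))

theorem finsum_mul_apply_eq_one (f : PartitionOfUnity ι X Set.univ)
    (g : PartitionOfUnity κ X Set.univ) (x : X) :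
    ∑ᶠ p : ι × κ, f p.1 x * g p.2 x = 1 := by
  classical
  calc ∑ᶠ p : ι × κ, f p.1 x * g p.2 x
      = ∑ p ∈ f.finsupport x ×ˢ g.finsupport x, f p.1 x * g p.2 x :=
        finsum_eq_sum_of_support_subset _ fun p hp => Finset.mem_product.2
          ⟨(f.mem_finsupport x).2 (left_ne_zero_of_mul hp),
            (g.mem_finsupport x).2 (right_ne_zero_of_mul hp)⟩
    _ = (∑ i ∈ f.finsupport x, f i x) * ∑ j ∈ g.finsupport x, g j x := by
        rw [Finset.sum_mul_sum, Finset.sum_product]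
    _ = 1 := by
        rw [f.sum_finsupport (Set.mem_univ x), g.sum_finsupport (Set.mem_univ x), one_mul]

def mul (f : PartitionOfUnity ι X Set.univ) (g : PartitionOfUnity κ X Set.univ) :
    PartitionOfUnity (ι × κ) X Set.univ where
  toFun p := f p.1 * g p.2
  locallyFinite' x := by
    obtain ⟨V, hV, hVfin⟩ := f.locallyFinite x
    obtain ⟨W, hW, hWfin⟩ := g.locallyFinite x
    refine ⟨V ∩ W, Filter.inter_mem hV hW, (hVfin.prod hWfin).subset ?_⟩
    rintro p ⟨y, hy, hyV, hyW⟩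
    exact ⟨⟨y, left_ne_zero_of_mul hy, hyV⟩, ⟨y, right_ne_zero_of_mul hy, hyW⟩⟩
  nonneg' p x := mul_nonneg (f.nonneg p.1 x) (g.nonneg p.2 x)
  sum_eq_one' x _ := finsum_mul_apply_eq_one f g x
  sum_le_one' x := (finsum_mul_apply_eq_one f g x).le

theorem IsSubordinate.mul {f : PartitionOfUnity ι X Set.univ} {g : PartitionOfUnity κ X Set.univ}
    {U : ι → Set X} {V : κ → Set X} (hf : f.IsSubordinate U) (hg : g.IsSubordinate V) :
    (f.mul g).IsSubordinate fun p => U p.1 ∩ V p.2 :=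
  fun p => Set.subset_inter (tsupport_mul_subset_left.trans (hf p.1))
    (tsupport_mul_subset_right.trans (hg p.2))

section pi

variable {α : Type*} [Fintype α] {ι : α → Type*}

theorem finsum_prod_apply_eq_one (f : ∀ a, PartitionOfUnity (ι a) X Set.univ) (x : X) :
    ∑ᶠ js : ∀ a, ι a, ∏ a, f a (js a) x = 1 := by
  classical
  calc ∑ᶠ js : ∀ a, ι a, ∏ a, f a (js a) x
      = ∑ js ∈ Fintype.piFinset fun a => (f a).finsupport x, ∏ a, f a (js a) x :=
        finsum_eq_sum_of_support_subset _ fun js hjs => Fintype.mem_piFinset.2 fun a =>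
          ((f a).mem_finsupport x).2 (Finset.prod_ne_zero_iff.1 hjs a (Finset.mem_univ a))
    _ = ∏ a, ∑ i ∈ (f a).finsupport x, f a i x :=
        (Finset.prod_univ_sum (fun a => (f a).finsupport x) fun a i => f a i x).symm
    _ = 1 := Finset.prod_eq_one fun a _ => (f a).sum_finsupport (Set.mem_univ x)

def pi (f : ∀ a, PartitionOfUnity (ι a) X Set.univ) :
    PartitionOfUnity (∀ a, ι a) X Set.univ where
  toFun js := ⟨fun x => ∏ a, f a (js a) x,
    continuous_finsetProd _ fun a _ => (f a (js a)).continuous⟩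
  locallyFinite' x := by
    choose V hV hVfin using fun a => (f a).locallyFinite x
    refine ⟨⋂ a, V a, Filter.iInter_mem.2 hV, (Set.Finite.pi hVfin).subset ?_⟩
    rintro js ⟨y, hy, hyV⟩ a -
    exact ⟨y, Finset.prod_ne_zero_iff.1 hy a (Finset.mem_univ a), Set.mem_iInter.1 hyV a⟩
  nonneg' js x := Finset.prod_nonneg fun a _ => (f a).nonneg (js a) x
  sum_eq_one' x _ := finsum_prod_apply_eq_one f x
  sum_le_one' x := (finsum_prod_apply_eq_one f x).le

theorem IsSubordinate.pi {f : ∀ a, PartitionOfUnity (ι a) X Set.univ} {U : ∀ a, ι a → Set X}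
    (hf : ∀ a, (f a).IsSubordinate (U a)) :
    (pi f).IsSubordinate fun js => ⋂ a, U a (js a) := by
  intro js
  refine (closure_minimal (fun x hx => Set.mem_iInter.2 fun a => subset_tsupport _ ?_)
    (isClosed_iInter fun a => isClosed_tsupport (f a (js a)))).trans
    (Set.iInter_mono fun a => hf a (js a))
  exact Finset.prod_ne_zero_iff.1 hx a (Finset.mem_univ a)

end pi

end PartitionOfUnity

def IsNumerableCover {X : Type*} [TopologicalSpace X] {ι : Type*} (U : ι → Set X) : Prop :=
  (∀ i, IsOpen (U i)) ∧ ∃ f : PartitionOfUnity ι X Set.univ, f.IsSubordinate U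

section IsNumerableCover

variable {X Y : Type*} [TopologicalSpace X] [TopologicalSpace Y] {ι κ : Type*}

theorem isNumerableCover_univ : IsNumerableCover fun _ : Unit => (Set.univ : Set X) :=
  ⟨fun _ => isOpen_univ, (BumpCovering.single () Set.univ).toPartitionOfUnity,
    fun _ => Set.subset_univ _⟩

theorem IsNumerableCover.preimage {U : ι → Set Y} (hU : IsNumerableCover U) (g : C(X, Y)) :
    IsNumerableCover fun i => g ⁻¹' U i :=
  let ⟨hUo, f, hf⟩ := hU
  ⟨fun i => (hUo i).preimage g.continuous, f.comp g, hf.comp g⟩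

theorem IsNumerableCover.prod {U : ι → Set X} {V : κ → Set Y} (hU : IsNumerableCover U)
    (hV : IsNumerableCover V) : IsNumerableCover fun p : ι × κ => U p.1 ×ˢ V p.2 :=
  let ⟨hUo, f, hf⟩ := hU.preimage (ContinuousMap.fst : C(X × Y, X))
  let ⟨hVo, g, hg⟩ := hV.preimage (ContinuousMap.snd : C(X × Y, Y))
  ⟨fun p => (hUo p.1).inter (hVo p.2), f.mul g, hf.mul hg⟩

theorem IsNumerableCover.pi {α : Type*} [Fintype α] {X : α → Type*}
    [∀ a, TopologicalSpace (X a)] {ι : α → Type*} {U : ∀ a, ι a → Set (X a)}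
    (hU : ∀ a, IsNumerableCover (U a)) :
    IsNumerableCover fun js : ∀ a, ι a => Set.univ.pi fun a => U a (js a) := by
  choose hUo f hf using fun a => (hU a).preimage (ContinuousMap.eval (X := X) a)
  simp only [Set.univ_pi_eq_iInter]
  exact ⟨fun js => isOpen_iInter_of_finite fun a => hUo a (js a), PartitionOfUnity.pi f,
    PartitionOfUnity.IsSubordinate.pi hf⟩

end IsNumerableCover

namespace TopOperad

variable (O : TopOperad)

theorem disjoint_decoMap_node {n : ℕ} {ch : Fin n → PTree} {U₀ : Set (O.A n)}
    {U : ∀ i, Set (O.deco (ch i))}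
    (hU₀ : ∀ σ : Equiv.Perm (Fin n), σ ≠ 1 → Disjoint U₀ ((fun a => O.act n a σ) '' U₀))
    (hU : ∀ i (ψ : TreeIso (ch i) (ch i)), ψ ≠ TreeIso.id (ch i) →
      Disjoint (U i) (O.decoMap ψ '' U i))
    {φ : TreeIso (.node n ch) (.node n ch)} (hφ : φ ≠ TreeIso.id (.node n ch)) :
    Disjoint (U₀ ×ˢ Set.univ.pi U : Set (O.deco (.node n ch)))
      (O.decoMap φ '' (U₀ ×ˢ Set.univ.pi U)) := by
  obtain _ | ⟨σ, ψ⟩ := φ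
  rw [Set.disjoint_left]
  rintro d ⟨hd₀, hd⟩ ⟨y, ⟨hy₀, hy⟩, rfl⟩
  by_cases hσ : σ = 1
  · subst hσ
    obtain ⟨i, hi⟩ : ∃ i, ψ i ≠ TreeIso.id (ch i) := by
      by_contra! h
      exact hφ (congrArg (TreeIso.node 1) (funext h))
    -- `hd i` typechecks: the cast in `decoMap` is along `1 (1⁻¹ i) = i`, a definitional equality.
    exact Set.disjoint_left.1 (hU i (ψ i) hi) (hd i trivial) ⟨y.2 i, hy i trivial, rfl⟩
  · exact Set.disjoint_left.1 (hU₀ σ hσ) hd₀ ⟨y.1, hy₀, rfl⟩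

theorem exists_isNumerableCover_disjoint_decoMap (hO : O.SigmaFree) :
    ∀ T : PTree, ∃ (ι : Type) (U : ι → Set (O.deco T)), IsNumerableCover U ∧
      ∀ i (φ : TreeIso T T), φ ≠ TreeIso.id T → Disjoint (U i) (O.decoMap φ '' U i)
  | .leaf => ⟨Unit, fun _ => Set.univ, isNumerableCover_univ, fun _ φ hφ => by
      cases φ
      exact (hφ rfl).elim⟩
  | .node n ch => by
    obtain ⟨ι₀, U₀, f₀, hU₀o, hf₀, hU₀⟩ := hO n
    choose ι U hU hUfree using fun i => exists_isNumerableCover_disjoint_decoMap hO (ch i)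
    exact ⟨ι₀ × ∀ i, ι i, fun p => U₀ p.1 ×ˢ Set.univ.pi fun i => U i (p.2 i),
      IsNumerableCover.prod ⟨hU₀o, f₀, hf₀⟩ (IsNumerableCover.pi hU),
      fun p φ hφ => O.disjoint_decoMap_node (hU₀ p.1) (fun i => hUfree i (p.2 i)) hφ⟩

end TopOperad

/-- Let `O` be a `Σ`-free operad in `Top` and `T` a planar tree.  Then the
space `underline(O)(T)` of `O`-decorations of `T`, with its natural right action of the
group `Aut(T)` of non-planar automorphisms of `T`, is a numerable principal `Aut(T)`-space:
there is an open cover with a subordinate partition of unity such that each member of the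
cover is disjoint from all of its translates under nonidentity automorphisms. -/
theorem deco_is_numerable_principal_Aut_space
    (O : TopOperad) (hO : O.SigmaFree) (T : PTree) :
    ∃ (ι : Type) (U : ι → Set (O.deco T)) (f : PartitionOfUnity ι (O.deco T) Set.univ),
      (∀ i, IsOpen (U i)) ∧ f.IsSubordinate U ∧
        ∀ (i : ι) (φ : TreeIso T T), φ ≠ TreeIso.id T →
          Disjoint (U i) (O.decoMap φ '' U i) := by
  obtain ⟨ι, U, ⟨hUo, f, hf⟩, hU⟩ := O.exists_isNumerableCover_disjoint_decoMap hO T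
  exact ⟨ι, U, f, hUo, hf, hU⟩

end
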